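/- arXiv:1510.01130 — 5 statements merged into one kernel-verified Lean document; each statement's English description precedes it below -/
import Mathlib

section
/- In the Bregman iteration, the sequence (H(u^{(k)}))_k is monotonically decreasing: H(u^{(k+1)}) ≤ H(u^{(k)}) for all k, with strict inequality whenever D_J^{p^{(k)}}(u^{(k+1)}, u^{(k)}) > 0. -/
open RealInnerProductSpace

/-- The Bregman divergence `D_J^p(x, y) = J(x) - J(y) - ⟨p, x - y⟩`. -/
noncomputable def bregman {n : ℕ} (J : EuclideanSpace ℝ (Fin n) → ℝ)
    (p x y : EuclideanSpace ℝ (Fin n)) : ℝ :=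
  J x - J y - ⟪p, x - y⟫

/-- In the Bregman iteration the sequence `(H(u k))` is monotonically decreasing, with strict
inequality whenever the Bregman divergence `D_J^{p k}(u (k+1), u k)` is positive. -/
theorem bregman_iteration_H_decreasing {n : ℕ}
    (J H : EuclideanSpace ℝ (Fin n) → ℝ)
    (hJ : ConvexOn ℝ Set.univ J) (hH : ConvexOn ℝ Set.univ H)
    (hHnonneg : ∀ u, 0 ≤ H u) (hHdiff : Differentiable ℝ H)
    (lam : ℝ) (hlam : 0 < lam)
    (u p : ℕ → EuclideanSpace ℝ (Fin n))
    (hsub : ∀ k x, J x - J (u k) ≥ ⟪p k, x - u k⟫)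
    (hmin : ∀ k x, bregman J (p k) (u (k + 1)) (u k) + lam * H (u (k + 1)) ≤
      bregman J (p k) x (u k) + lam * H x)
    (k : ℕ) :
    H (u (k + 1)) ≤ H (u k) ∧
      (0 < bregman J (p k) (u (k + 1)) (u k) → H (u (k + 1)) < H (u k)) := by
  have hD0 : bregman J (p k) (u k) (u k) = 0 := by
    simp [bregman]
  have hkey := hmin k (u k)
  rw [hD0] at hkey
  have hDnn : 0 ≤ bregman J (p k) (u (k + 1)) (u k) := by
    have := hsub k (u (k + 1))
    simp only [bregman]
    linarith
  have hle : lam * H (u (k + 1)) ≤ lam * H (u k) := by linarith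
  have h1 : H (u (k + 1)) ≤ H (u k) := le_of_mul_le_mul_left hle hlam
  refine ⟨h1, fun hpos => ?_⟩
  have hlt : lam * H (u (k + 1)) < lam * H (u k) := by linarith
  exact lt_of_mul_lt_mul_left hlt hlam.le
end

section
/- For the Bregman iteration with parameter λ > 0, for every u ∈ ℝⁿ and every k ≥ 1: D_J^{p^{(k)}}(u, u^{(k)}) + D_J^{p^{(k-1)}}(u^{(k)}, u^{(k-1)}) - D_J^{p^{(k-1)}}(u, u^{(k-1)}) ≤ λ (H(u) - H(u^{(k)})). -/
/-! By the three-point identity for Bregman divergences the left-hand side equals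
`⟪p (k-1) - p k, v - u k⟫`, which the update rule turns into `λ ⟪∇H (u k), v - u k⟫`;
the gradient inequality for the convex function `H` bounds this by `λ (H v - H (u k))`. -/

open RealInnerProductSpace

theorem ConvexOn.apply_sub_le_sub_of_hasFDerivAt {E : Type*} [NormedAddCommGroup E]
    [NormedSpace ℝ E] {s : Set E} {f : E → ℝ} {f' : E →L[ℝ] ℝ} {x y : E}
    (hf : ConvexOn ℝ s f) (hx : x ∈ s) (hy : y ∈ s) (hf' : HasFDerivAt f f' x) :
    f' (y - x) ≤ f y - f x := by
  set g : ℝ →ᵃ[ℝ] E := AffineMap.lineMap x y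
  have hline : ConvexOn ℝ (g ⁻¹' s) (f ∘ g) := hf.comp_affineMap g
  have hderiv : HasDerivAt (f ∘ g) (f' (y - x)) 0 := by
    refine HasFDerivAt.comp_hasDerivAt _ ?_ AffineMap.hasDerivAt_lineMap
    simpa [g] using hf'
  simpa [g, slope_def_field] using
    hline.le_slope_of_hasDerivAt (x := 0) (y := 1) (by simpa [g] using hx)
      (by simpa [g] using hy) one_pos hderiv

theorem ConvexOn.inner_gradient_le_sub {E : Type*} [NormedAddCommGroup E]
    [InnerProductSpace ℝ E] [CompleteSpace E] {s : Set E} {f : E → ℝ} {f' x y : E}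
    (hf : ConvexOn ℝ s f) (hx : x ∈ s) (hy : y ∈ s) (hf' : HasGradientAt f f' x) :
    ⟪f', y - x⟫ ≤ f y - f x :=
  hf.apply_sub_le_sub_of_hasFDerivAt hx hy hf'.hasFDerivAt

theorem bregman_add_bregman_sub_bregman {n : ℕ} (J : EuclideanSpace ℝ (Fin n) → ℝ)
    (p q x y z : EuclideanSpace ℝ (Fin n)) :
    bregman J q x y + bregman J p y z - bregman J p x z = ⟪p - q, x - y⟫ := by
  simp only [bregman, inner_sub_left, inner_sub_right]
  ring

theorem bregman_iteration_key_inequality_general {n : ℕ}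
    (J H : EuclideanSpace ℝ (Fin n) → ℝ)
    (hH : ConvexOn ℝ Set.univ H) (hHdiff : Differentiable ℝ H)
    (lam : ℝ) (hlam : 0 < lam)
    (u p : ℕ → EuclideanSpace ℝ (Fin n))
    (hupd : ∀ k, p (k + 1) = p k - lam • gradient H (u (k + 1))) :
    ∀ (v : EuclideanSpace ℝ (Fin n)) (k : ℕ), 1 ≤ k →
      bregman J (p k) v (u k) + bregman J (p (k - 1)) (u k) (u (k - 1)) -
          bregman J (p (k - 1)) v (u (k - 1)) ≤ lam * (H v - H (u k)) := by
  rintro v (_ | k) hk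
  · cases hk
  have hgrad : ⟪gradient H (u (k + 1)), v - u (k + 1)⟫ ≤ H v - H (u (k + 1)) :=
    hH.inner_gradient_le_sub trivial trivial (hHdiff _).hasGradientAt
  calc bregman J (p (k + 1)) v (u (k + 1)) + bregman J (p k) (u (k + 1)) (u k) -
        bregman J (p k) v (u k)
      = lam * ⟪gradient H (u (k + 1)), v - u (k + 1)⟫ := by
        rw [bregman_add_bregman_sub_bregman, hupd, sub_sub_cancel, real_inner_smul_left]
    _ ≤ lam * (H v - H (u (k + 1))) := mul_le_mul_of_nonneg_left hgrad hlam.le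

/-- For the Bregman iteration with parameter `λ > 0`, for every `u` and every `k ≥ 1`:
`D_J^{p k}(u, u k) + D_J^{p (k-1)}(u k, u (k-1)) - D_J^{p (k-1)}(u, u (k-1))
  ≤ λ (H(u) - H(u k))`. -/
theorem bregman_iteration_key_inequality {n : ℕ}
    (J H : EuclideanSpace ℝ (Fin n) → ℝ)
    (hJ : ConvexOn ℝ Set.univ J) (hH : ConvexOn ℝ Set.univ H)
    (hHnonneg : ∀ u, 0 ≤ H u) (hHdiff : Differentiable ℝ H)
    (lam : ℝ) (hlam : 0 < lam)
    (u p : ℕ → EuclideanSpace ℝ (Fin n))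
    (hsub : ∀ k x, J x - J (u k) ≥ ⟪p k, x - u k⟫)
    (hmin : ∀ k x, bregman J (p k) (u (k + 1)) (u k) + lam * H (u (k + 1)) ≤
      bregman J (p k) x (u k) + lam * H x)
    (hupd : ∀ k, p (k + 1) = p k - lam • gradient H (u (k + 1))) :
    ∀ (v : EuclideanSpace ℝ (Fin n)) (k : ℕ), 1 ≤ k →
      bregman J (p k) v (u k) + bregman J (p (k - 1)) (u k) (u (k - 1)) -
          bregman J (p (k - 1)) v (u (k - 1)) ≤ lam * (H v - H (u k)) :=
  bregman_iteration_key_inequality_general J H hH hHdiff lam hlam u p hupd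
end

section
/- If ũ satisfies H(ũ) = 0 (with H nonnegative), then the Bregman distances to ũ along the Bregman iteration are monotonically decreasing: 0 ≤ D_J^{p^{(k)}}(ũ, u^{(k)}) ≤ D_J^{p^{(k-1)}}(ũ, u^{(k-1)}) for all k ≥ 1. -/
open RealInnerProductSpace

/-- Gradient inequality for a convex differentiable function. -/
lemma convex_gradient_ineq {n : ℕ} (H : EuclideanSpace ℝ (Fin n) → ℝ)
    (hH : ConvexOn ℝ Set.univ H) (hHdiff : Differentiable ℝ H)
    (x y : EuclideanSpace ℝ (Fin n)) :
    ⟪gradient H y, x - y⟫ ≤ H x - H y := by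
  set g : ℝ → ℝ := H ∘ (AffineMap.lineMap y x : ℝ →ᵃ[ℝ] EuclideanSpace ℝ (Fin n)) with hg
  have hgconv : ConvexOn ℝ Set.univ g := by
    have := hH.comp_affineMap (AffineMap.lineMap y x : ℝ →ᵃ[ℝ] EuclideanSpace ℝ (Fin n))
    simpa using this
  have hc : HasDerivAt (fun t : ℝ => (AffineMap.lineMap y x : ℝ →ᵃ[ℝ] EuclideanSpace ℝ (Fin n)) t)
      (x - y) 0 := by
    simp only [AffineMap.coe_lineMap]
    simpa using ((hasDerivAt_id (0 : ℝ)).smul_const (x - y)).add_const y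
  have hgrad : HasGradientAt H (gradient H y) y := (hHdiff y).hasGradientAt
  have hfd : HasFDerivAt H
      ((InnerProductSpace.toDual ℝ (EuclideanSpace ℝ (Fin n))) (gradient H y)) y :=
    hasGradientAt_iff_hasFDerivAt.mp hgrad
  have hc0 : (AffineMap.lineMap y x : ℝ →ᵃ[ℝ] EuclideanSpace ℝ (Fin n)) (0 : ℝ) = y := by
    simp
  have hgd : HasDerivAt g (⟪gradient H y, x - y⟫) 0 := by
    have := (hc0 ▸ hfd).comp_hasDerivAt 0 hc
    simpa [g, InnerProductSpace.toDual_apply_apply] using this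
  have hslope := hgconv.le_slope_of_hasDerivAt (Set.mem_univ (0 : ℝ)) (Set.mem_univ (1 : ℝ))
    one_pos hgd
  have hg0 : g 0 = H y := by simp [g]
  have hg1 : g 1 = H x := by simp [g, AffineMap.lineMap_apply_one]
  rw [slope_def_field] at hslope
  simp only [hg0, hg1] at hslope
  have : (H x - H y) / (1 - 0) = H x - H y := by norm_num
  linarith

/-- If `H(ũ) = 0` (with `H` nonnegative), the Bregman distances to `ũ` along the
Bregman iteration are monotonically decreasing:
`0 ≤ D_J^{p k}(ũ, u k) ≤ D_J^{p (k-1)}(ũ, u (k-1))` for all `k ≥ 1`. -/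
theorem bregman_distance_to_solution_decreasing {n : ℕ}
    (J H : EuclideanSpace ℝ (Fin n) → ℝ)
    (hJ : ConvexOn ℝ Set.univ J) (hH : ConvexOn ℝ Set.univ H)
    (hHnonneg : ∀ u, 0 ≤ H u) (hHdiff : Differentiable ℝ H)
    (lam : ℝ) (hlam : 0 < lam)
    (u p : ℕ → EuclideanSpace ℝ (Fin n))
    (hsub : ∀ k x, J x - J (u k) ≥ ⟪p k, x - u k⟫)
    (hmin : ∀ k x, bregman J (p k) (u (k + 1)) (u k) + lam * H (u (k + 1)) ≤
      bregman J (p k) x (u k) + lam * H x)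
    (hupd : ∀ k, p (k + 1) = p k - lam • gradient H (u (k + 1)))
    (utilde : EuclideanSpace ℝ (Fin n)) (hutilde : H utilde = 0) :
    ∀ k : ℕ, 1 ≤ k →
      0 ≤ bregman J (p k) utilde (u k) ∧
        bregman J (p k) utilde (u k) ≤ bregman J (p (k - 1)) utilde (u (k - 1)) := by
  intro k hk
  obtain ⟨m, rfl⟩ : ∃ m, k = m + 1 := ⟨k - 1, (Nat.succ_pred_eq_of_pos hk).symm⟩
  simp only [Nat.add_sub_cancel]
  constructor
  · have h1 := hsub (m + 1) utilde
    simp only [bregman]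
    linarith
  · have h1 := hsub m (u (m + 1))
    have h2 := convex_gradient_ineq H hH hHdiff utilde (u (m + 1))
    have h3 := hHnonneg (u (m + 1))
    rw [hutilde] at h2
    have h4 := mul_le_mul_of_nonneg_left h2 hlam.le
    simp only [bregman, hupd m, inner_sub_left, inner_sub_right, real_inner_smul_left] at *
    nlinarith [h1, h4, h3, hlam]
end

section
/- Let ũ be a J-minimising solution of Au = b and assume the source condition holds: there exists q with Aᵀq ∈ ∂J(ũ). If the Bregman iteration for H(u) = (1/2)‖Au - b‖₂² is started with p^{(0)} = 0, then D_J^{p^{(k)}}(ũ, u^{(k)}) ≤ ‖q‖₂² / (2λk) for all k ≥ 1. -/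
open RealInnerProductSpace

/-- Elementary inner product identity used in the telescoping estimate. -/
lemma bregman_inner_key {m : ℕ} (q w w' : EuclideanSpace ℝ (Fin m)) :
    ⟪q - w', w' - w⟫ ≤ (‖q - w‖ ^ 2 - ‖q - w'‖ ^ 2) / 2 := by
  have h : ‖q - w‖ ^ 2 = ‖(q - w') + (w' - w)‖ ^ 2 := by
    congr 1; congr 1; abel
  rw [norm_add_sq_real] at h
  nlinarith [sq_nonneg ‖w' - w‖]

/-- If `ũ` is a `J`-minimising solution of `Au = b` satisfying the source condition
`Aᵀq ∈ ∂J(ũ)`, then the Bregman iteration for `H(u) = (1/2)‖Au - b‖²` started with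
`p 0 = 0` satisfies `D_J^{p k}(ũ, u k) ≤ ‖q‖² / (2λk)` for all `k ≥ 1`. -/
theorem bregman_error_estimate_source_condition {n m : ℕ}
    (J : EuclideanSpace ℝ (Fin n) → ℝ) (hJ : ConvexOn ℝ Set.univ J)
    (A : EuclideanSpace ℝ (Fin n) →L[ℝ] EuclideanSpace ℝ (Fin m))
    (b : EuclideanSpace ℝ (Fin m))
    (utilde : EuclideanSpace ℝ (Fin n))
    (hsol : A utilde = b)
    (hminsol : ∀ v, A v = b → J utilde ≤ J v)
    (q : EuclideanSpace ℝ (Fin m))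
    (hsource : ∀ v, J v - J utilde ≥ ⟪(ContinuousLinearMap.adjoint A) q, v - utilde⟫)
    (lam : ℝ) (hlam : 0 < lam)
    (u p : ℕ → EuclideanSpace ℝ (Fin n))
    (hp0 : p 0 = 0)
    (hsub : ∀ k x, J x - J (u k) ≥ ⟪p k, x - u k⟫)
    (hmin : ∀ k x,
      bregman J (p k) (u (k + 1)) (u k) + lam / 2 * ‖A (u (k + 1)) - b‖ ^ 2 ≤
        bregman J (p k) x (u k) + lam / 2 * ‖A x - b‖ ^ 2)
    (hupd : ∀ k, p (k + 1) = p k + lam • (ContinuousLinearMap.adjoint A) (b - A (u (k + 1)))) :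
    ∀ k : ℕ, 1 ≤ k → bregman J (p k) utilde (u k) ≤ ‖q‖ ^ 2 / (2 * lam * k) := by
  -- the "dual" iterates in the data space
  set w : ℕ → EuclideanSpace ℝ (Fin m) :=
    fun k => ∑ i ∈ Finset.range k, lam • (b - A (u (i + 1))) with hw_def
  have hwsucc : ∀ k, w (k + 1) = w k + lam • (b - A (u (k + 1))) := by
    intro k
    simp [hw_def, Finset.sum_range_succ]
  have hw : ∀ k, p k = (ContinuousLinearMap.adjoint A) (w k) := by
    intro k
    induction k with
    | zero => simp [hw_def, hp0]
    | succ k ih =>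
        rw [hupd k, ih, hwsucc k, map_add, map_smul]
  have hAsub : ∀ k, A (utilde - u (k + 1)) = b - A (u (k + 1)) := by
    intro k; rw [map_sub, hsol]
  -- monotonicity of the Bregman distances
  have hmono : ∀ k, bregman J (p (k + 1)) utilde (u (k + 1)) ≤
      bregman J (p k) utilde (u k) := by
    intro k
    have h1 : ⟪p (k + 1), utilde - u (k + 1)⟫ =
        ⟪p k, utilde - u (k + 1)⟫ + lam * ‖b - A (u (k + 1))‖ ^ 2 := by
      rw [hupd k, inner_add_left, real_inner_smul_left,
        ContinuousLinearMap.adjoint_inner_left, hAsub k,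
        real_inner_self_eq_norm_sq]
    have h2 := hsub k (u (k + 1))
    have h3 : ⟪p k, utilde - u k⟫ =
        ⟪p k, utilde - u (k + 1)⟫ + ⟪p k, u (k + 1) - u k⟫ := by
      rw [← inner_add_right]; congr 1; abel
    have h4 : 0 ≤ lam * ‖b - A (u (k + 1))‖ ^ 2 :=
      mul_nonneg hlam.le (sq_nonneg _)
    simp only [bregman] at *
    linarith
  have hanti : ∀ i j : ℕ, i ≤ j →
      bregman J (p j) utilde (u j) ≤ bregman J (p i) utilde (u i) := by
    intro i j hij
    induction hij with
    | refl => exact le_refl _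
    | step h ih => exact le_trans (hmono _) ih
  -- the one-step telescoping estimate
  have hD : ∀ j, bregman J (p (j + 1)) utilde (u (j + 1)) ≤
      (‖q - w j‖ ^ 2 - ‖q - w (j + 1)‖ ^ 2) / (2 * lam) := by
    intro j
    have hs := hsource (u (j + 1))
    have hflip : ⟪(ContinuousLinearMap.adjoint A) q, u (j + 1) - utilde⟫ =
        -⟪(ContinuousLinearMap.adjoint A) q, utilde - u (j + 1)⟫ := by
      rw [← inner_neg_right]; congr 1; abel
    have step1 : bregman J (p (j + 1)) utilde (u (j + 1)) ≤
        ⟪(ContinuousLinearMap.adjoint A) q - p (j + 1), utilde - u (j + 1)⟫ := by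
      rw [inner_sub_left]
      simp only [bregman]
      rw [hflip] at hs
      linarith
    have step2 : ⟪(ContinuousLinearMap.adjoint A) q - p (j + 1), utilde - u (j + 1)⟫
        = ⟪q - w (j + 1), b - A (u (j + 1))⟫ := by
      rw [hw (j + 1), ← map_sub, ContinuousLinearMap.adjoint_inner_left, hAsub j]
    have step3 : ⟪q - w (j + 1), w (j + 1) - w j⟫ =
        lam * ⟪q - w (j + 1), b - A (u (j + 1))⟫ := by
      rw [hwsucc j]
      have : w j + lam • (b - A (u (j + 1))) - w j = lam • (b - A (u (j + 1))) := by
        abel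
      rw [this, real_inner_smul_right]
    have key := bregman_inner_key q (w j) (w (j + 1))
    rw [step3] at key
    have : ⟪q - w (j + 1), b - A (u (j + 1))⟫ ≤
        (‖q - w j‖ ^ 2 - ‖q - w (j + 1)‖ ^ 2) / (2 * lam) := by
      rw [le_div_iff₀ (by positivity)]
      nlinarith
    linarith [step1, step2.le, step2.ge, this]
  -- sum the telescoping estimates
  have hsum : ∀ k : ℕ,
      ∑ j ∈ Finset.range k, bregman J (p (j + 1)) utilde (u (j + 1)) ≤
        ‖q‖ ^ 2 / (2 * lam) := by
    intro k
    have h1 : ∑ j ∈ Finset.range k, bregman J (p (j + 1)) utilde (u (j + 1)) ≤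
        ∑ j ∈ Finset.range k,
          (‖q - w j‖ ^ 2 - ‖q - w (j + 1)‖ ^ 2) / (2 * lam) :=
      Finset.sum_le_sum fun j _ => hD j
    have h2 : ∑ j ∈ Finset.range k,
        (‖q - w j‖ ^ 2 - ‖q - w (j + 1)‖ ^ 2) / (2 * lam) =
        (‖q - w 0‖ ^ 2 - ‖q - w k‖ ^ 2) / (2 * lam) := by
      rw [← Finset.sum_div, Finset.sum_range_sub' (fun i => ‖q - w i‖ ^ 2)]
    have h3 : w 0 = 0 := by simp [hw_def]
    have h4 : (‖q - w 0‖ ^ 2 - ‖q - w k‖ ^ 2) / (2 * lam) ≤ ‖q‖ ^ 2 / (2 * lam) := by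
      rw [h3, sub_zero]
      have : 0 ≤ ‖q - w k‖ ^ 2 := sq_nonneg _
      apply div_le_div_of_nonneg_right ?_ (by positivity) |>.trans_eq rfl
      linarith
    calc _ ≤ _ := h1
      _ = _ := h2
      _ ≤ _ := h4
  intro k hk
  -- compare k·D_k with the partial sum
  have hcmp : (k : ℝ) * bregman J (p k) utilde (u k) ≤
      ∑ j ∈ Finset.range k, bregman J (p (j + 1)) utilde (u (j + 1)) := by
    have : (k : ℝ) * bregman J (p k) utilde (u k) =
        ∑ _j ∈ Finset.range k, bregman J (p k) utilde (u k) := by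
      rw [Finset.sum_const, Finset.card_range, nsmul_eq_mul]
    rw [this]
    exact Finset.sum_le_sum fun j hj =>
      hanti (j + 1) k (Nat.succ_le_of_lt (Finset.mem_range.mp hj))
  have hkpos : (0 : ℝ) < k := by exact_mod_cast hk
  have := le_trans hcmp (hsum k)
  rw [le_div_iff₀ (by positivity)]
  have hq : bregman J (p k) utilde (u k) * (2 * lam) * k ≤ ‖q‖ ^ 2 := by
    have h' : ((k : ℝ) * bregman J (p k) utilde (u k)) * (2 * lam) ≤
        (‖q‖ ^ 2 / (2 * lam)) * (2 * lam) :=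
      mul_le_mul_of_nonneg_right this (by positivity)
    rw [div_mul_cancel₀ _ (by positivity : (2 : ℝ) * lam ≠ 0)] at h'
    nlinarith
  nlinarith
end

section
/- The Bregman iteration for the constrained problem min { J(u) : Au = b } with quadratic penalty, namely u^{(k+1)} = argmin { D_J^{p^{(k)}}(u, u^{(k)}) + (λ/2)‖Au - b‖₂² } with p^{(k+1)} = p^{(k)} + λAᵀ(b - Au^{(k+1)}) and p^{(0)} = 0, produces the same iterates u^{(k)} as the 'adding back the residual' scheme u^{(k+1)} = argmin { J(u) + (λ/2)‖Au - b^{(k)}‖₂² }, b^{(k+1)} = b^{(k)} + b - Au^{(k+1)}, with b^{(0)} = b; indeed p^{(k)} = λAᵀ(b^{(k)} - b) and the two minimisation objectives differ only by a constant in u. -/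
open RealInnerProductSpace

/-- Equivalence of the standard Bregman iteration for `min {J(u) : Au = b}` with quadratic
penalty and the 'adding back the residual' scheme: with updates
`p (k+1) = p k + λAᵀ(b - A u (k+1))`, `p 0 = 0` and `b' (k+1) = b' k + b - A u (k+1)`,
`b' 0 = b`, one has `p k = λAᵀ(b' k - b)`, and the two minimisation objectives
`D_J^{p k}(·, u k) + (λ/2)‖A· - b‖²` and `J(·) + (λ/2)‖A· - b' k‖²` differ only by a
constant; in particular both schemes produce the same iterates. -/
theorem bregman_alternative_formulation {n m : ℕ}
    (J : EuclideanSpace ℝ (Fin n) → ℝ) (hJ : ConvexOn ℝ Set.univ J)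
    (A : EuclideanSpace ℝ (Fin n) →L[ℝ] EuclideanSpace ℝ (Fin m))
    (b : EuclideanSpace ℝ (Fin m))
    (lam : ℝ) (hlam : 0 < lam)
    (u p : ℕ → EuclideanSpace ℝ (Fin n))
    (b' : ℕ → EuclideanSpace ℝ (Fin m))
    (hp0 : p 0 = 0) (hb0 : b' 0 = b)
    (hpupd : ∀ k, p (k + 1) = p k + lam • (ContinuousLinearMap.adjoint A) (b - A (u (k + 1))))
    (hbupd : ∀ k, b' (k + 1) = b' k + b - A (u (k + 1))) :
    ∀ k : ℕ,
      p k = lam • (ContinuousLinearMap.adjoint A) (b' k - b) ∧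
      (∃ C : ℝ, ∀ x,
        bregman J (p k) x (u k) + lam / 2 * ‖A x - b‖ ^ 2 =
          J x + lam / 2 * ‖A x - b' k‖ ^ 2 + C) ∧
      ∀ x, (∀ y, bregman J (p k) x (u k) + lam / 2 * ‖A x - b‖ ^ 2 ≤
              bregman J (p k) y (u k) + lam / 2 * ‖A y - b‖ ^ 2) ↔
           (∀ y, J x + lam / 2 * ‖A x - b' k‖ ^ 2 ≤ J y + lam / 2 * ‖A y - b' k‖ ^ 2) := by

  have hpk : ∀ k, p k = lam • (ContinuousLinearMap.adjoint A) (b' k - b) := by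
    intro k
    induction k with
    | zero => simp [hp0, hb0]
    | succ k ih =>
      rw [hpupd, hbupd, ih, ← smul_add, ← map_add]
      congr 2
      abel
  intro k
  refine ⟨hpk k, ?_, ?_⟩
  · refine ⟨lam * ⟪b' k - b, A (u k)⟫ - lam * ⟪b' k - b, b⟫ - lam / 2 * ‖b' k - b‖ ^ 2
      - J (u k), fun x => ?_⟩
    have key : ‖A x - b' k‖ ^ 2
        = ‖A x - b‖ ^ 2 - 2 * ⟪A x - b, b' k - b⟫ + ‖b' k - b‖ ^ 2 := by
      have h : A x - b' k = (A x - b) - (b' k - b) := by abel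
      rw [h, norm_sub_sq_real]
    have hip : ⟪p k, x - u k⟫ = lam * (⟪b' k - b, A x⟫ - ⟪b' k - b, A (u k)⟫) := by
      rw [hpk k, real_inner_smul_left, ContinuousLinearMap.adjoint_inner_left, map_sub,
        inner_sub_right]
    have hsym : ⟪A x - b, b' k - b⟫ = ⟪b' k - b, A x⟫ - ⟪b' k - b, b⟫ := by
      rw [real_inner_comm, inner_sub_right]
    rw [bregman, hip, key, hsym]
    ring
  · obtain ⟨C, hC⟩ : ∃ C : ℝ, ∀ x,
        bregman J (p k) x (u k) + lam / 2 * ‖A x - b‖ ^ 2 =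
          J x + lam / 2 * ‖A x - b' k‖ ^ 2 + C := by
      refine ⟨lam * ⟪b' k - b, A (u k)⟫ - lam * ⟪b' k - b, b⟫ - lam / 2 * ‖b' k - b‖ ^ 2
        - J (u k), fun x => ?_⟩
      have key : ‖A x - b' k‖ ^ 2
          = ‖A x - b‖ ^ 2 - 2 * ⟪A x - b, b' k - b⟫ + ‖b' k - b‖ ^ 2 := by
        have h : A x - b' k = (A x - b) - (b' k - b) := by abel
        rw [h, norm_sub_sq_real]
      have hip : ⟪p k, x - u k⟫ = lam * (⟪b' k - b, A x⟫ - ⟪b' k - b, A (u k)⟫) := by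
        rw [hpk k, real_inner_smul_left, ContinuousLinearMap.adjoint_inner_left, map_sub,
          inner_sub_right]
      have hsym : ⟪A x - b, b' k - b⟫ = ⟪b' k - b, A x⟫ - ⟪b' k - b, b⟫ := by
        rw [real_inner_comm, inner_sub_right]
      rw [bregman, hip, key, hsym]
      ring
    intro x
    constructor
    · intro h y
      have := h y
      have h1 := hC x
      have h2 := hC y
      linarith
    · intro h y
      have := h y
      have h1 := hC x
      have h2 := hC y
      linarith
end
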